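/- arXiv:2312.05859 — 5 statements merged into one kernel-verified Lean document; each statement's English description precedes it below -/
import Mathlib

section
/- A strictly diagonally dominant tropical matrix is tropically nonsingular: if A = (a_{ij}) ∈ 𝕋^{p×p} satisfies a_{ii} > a_{ij} for all 1 ≤ i, j ≤ p with i ≠ j, then the only vector y ∈ 𝕋^p with A ⊙ y ∇ 𝟘 is y = 𝟘 = (−∞,…,−∞). -/
open scoped Pointwise

namespace TropicalNSS

/-- The tropical (max-plus) semiring `ℝ ∪ {-∞}`, with `⊕ = max` (the lattice `⊔`/`max`)
and `⊙ = +` (the `WithBot` addition, for which `⊥` is absorbing). -/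
abbrev Trop : Type := WithBot ℝ

variable {n k p q : ℕ}

/-- Coercion of an integer exponent vector to `ℝ^n`. -/
def zR (α : Fin n → ℤ) : Fin n → ℝ := fun i => (α i : ℝ)

/-- The usual pairing `⟨x, y⟩` on `ℝ^n`. -/
def dotR (x y : Fin n → ℝ) : ℝ := ∑ i, x i * y i

/-- The usual pairing on `ℝ^n × ℝ`. -/
def dotP (x y : (Fin n → ℝ) × ℝ) : ℝ := dotR x.1 y.1 + x.2 * y.2

/-- The support of a tropical Laurent polynomial. -/
def tsupp (f : (Fin n → ℤ) → Trop) : Set (Fin n → ℤ) := {α | f α ≠ ⊥}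

/-- The tropical value `f_α ⊙ x^{⊙α} = f_α + ⟨x, α⟩` of the monomial of exponent `α`. -/
noncomputable def mono (f : (Fin n → ℤ) → Trop) (x : Fin n → ℝ) (α : Fin n → ℤ) : Trop :=
  f α + ((dotR x (zR α) : ℝ) : Trop)

/-- `x` is a tropical root of `f`: the maximum `max_α (f_α + ⟨x,α⟩)` is attained
for at least two distinct exponents. -/
def IsTropRoot (f : (Fin n → ℤ) → Trop) (x : Fin n → ℝ) : Prop :=
  ∃ α β : Fin n → ℤ, α ≠ β ∧ mono f x α = mono f x β ∧
    ∀ γ : Fin n → ℤ, mono f x γ ≤ mono f x α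

/-- The row of the Macaulay matrix indexed by `(f, α)`, restricted to the columns in `E`,
has its maximum (against the vector `y`) attained at least twice. -/
def MacRow (f : (Fin n → ℤ) → Trop) (α : Fin n → ℤ) (E : Set (Fin n → ℤ))
    (y : (Fin n → ℤ) → Trop) : Prop :=
  ∃ β ∈ E, ∃ β' ∈ E, β ≠ β' ∧
    f (β - α) + y β = f (β' - α) + y β' ∧
    ∀ γ ∈ E, f (γ - α) + y γ ≤ f (β - α) + y β

/-- `M^𝒜_E ⊙ y ∇ 𝟘` : every row `(i, α)` of the Macaulay matrix of `f` with
`α + 𝒜 i ⊆ E` has its maximum attained at least twice on the columns in `E`. -/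
def MacaulayNull (f : Fin k → (Fin n → ℤ) → Trop) (A : Fin k → Set (Fin n → ℤ))
    (E : Set (Fin n → ℤ)) (y : (Fin n → ℤ) → Trop) : Prop :=
  ∀ (i : Fin k) (α : Fin n → ℤ), (∀ γ ∈ A i, α + γ ∈ E) → MacRow (f i) α E y

/-- Dimension of a subset of a real vector space: the dimension of its affine hull. -/
noncomputable def sdim {X : Type*} [AddCommGroup X] [Module ℝ X] (s : Set X) : ℕ :=
  Module.finrank ℝ (affineSpan ℝ s).direction

/-- `F` is a face of the convex set `P`: a convex extreme subset. -/
def IsFaceOf {X : Type*} [AddCommGroup X] [Module ℝ X] (F P : Set X) : Prop :=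
  Convex ℝ F ∧ IsExtreme ℝ P F

/-- `F` is a facet of `P`: a face of dimension `dim P - 1`. -/
def IsFacetOf {X : Type*} [AddCommGroup X] [Module ℝ X] (F P : Set X) : Prop :=
  IsFaceOf F P ∧ sdim F + 1 = sdim P

/-- A convex subset of `ℝ^n × ℝ` is vertical when `(0, 1)` belongs to the direction
of its affine hull. -/
def IsVert (F : Set ((Fin n → ℝ) × ℝ)) : Prop :=
  ((0 : Fin n → ℝ), (1 : ℝ)) ∈ (affineSpan ℝ F).direction

/-- The normal cone of `P ⊆ ℝ^n` at a point `x`. -/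
def normalCone (P : Set (Fin n → ℝ)) (x : Fin n → ℝ) : Set (Fin n → ℝ) :=
  {y | ∀ z ∈ P, dotR y (z - x) ≤ 0}

/-- The normal cone of `P ⊆ ℝ^n × ℝ` at a point `z`. -/
def normalConeP (P : Set ((Fin n → ℝ) × ℝ)) (z : (Fin n → ℝ) × ℝ) :
    Set ((Fin n → ℝ) × ℝ) :=
  {y | ∀ w ∈ P, dotP y (w - z) ≤ 0}

/-- A (closed convex) polyhedron in `ℝ^n`: a finite intersection of half-spaces. -/
def IsPolyhedron (P : Set (Fin n → ℝ)) : Prop :=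
  ∃ S : Set ((Fin n → ℝ) × ℝ), S.Finite ∧ P = {x | ∀ c ∈ S, dotR c.1 x ≤ c.2}

/-- A (closed convex) polyhedron in `ℝ^n × ℝ`. -/
def IsPolyhedronP (P : Set ((Fin n → ℝ) × ℝ)) : Prop :=
  ∃ S : Set (((Fin n → ℝ) × ℝ) × ℝ), S.Finite ∧ P = {x | ∀ c ∈ S, dotP c.1 x ≤ c.2}

/-- The hypograph of the coefficient map of `f`, as a subset of `ℝ^n × ℝ`. -/
def hypoPts (f : (Fin n → ℤ) → Trop) : Set ((Fin n → ℝ) × ℝ) :=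
  {z | ∃ α : Fin n → ℤ, z.1 = zR α ∧ (z.2 : Trop) ≤ f α}

/-- The hypograph of the concave hull `h` of the coefficient map of `f`
(the "extended Newton polytope" of `f`). -/
def hypoF (f : (Fin n → ℤ) → Trop) : Set ((Fin n → ℝ) × ℝ) :=
  convexHull ℝ (hypoPts f)

/-- The Newton polytope `Q = Q_1 + ⋯ + Q_k` of a collection of tropical polynomials. -/
def NPoly (f : Fin k → (Fin n → ℤ) → Trop) : Set (Fin n → ℝ) :=
  ∑ i, convexHull ℝ (zR '' tsupp (f i))

/-- `hypo(h) = hypo(h_1) + ⋯ + hypo(h_k)`, the hypograph of the sup-convolution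
`h = h_1 □ ⋯ □ h_k` of the concave hulls of the coefficient maps. -/
def HypSum (f : Fin k → (Fin n → ℤ) → Trop) : Set ((Fin n → ℝ) × ℝ) :=
  ∑ i, hypoF (f i)

/-- `δ` is a generic vector in `V + ℤ^n` (where `V` directs the affine hull of `Q`):
for every integer point `p` of `Q + δ`, the point `(p - δ, h(p - δ))` lies in the
relative interior of a unique non-vertical facet of `H = hypo(h)`. -/
def GenericDelta (Q : Set (Fin n → ℝ)) (H : Set ((Fin n → ℝ) × ℝ)) (δ : Fin n → ℝ) : Prop :=
  (∃ v ∈ (affineSpan ℝ Q).direction, ∃ z : Fin n → ℤ, δ = v + zR z) ∧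
  ∀ p : Fin n → ℤ, zR p - δ ∈ Q →
    ∃ t : ℝ, IsGreatest {s : ℝ | (zR p - δ, s) ∈ H} t ∧
      ∃! F : Set ((Fin n → ℝ) × ℝ),
        IsFacetOf F H ∧ ¬ IsVert F ∧ (zR p - δ, t) ∈ intrinsicInterior ℝ F

/-- `E` is a Canny-Emiris set: `E = (Q + δ) ∩ ℤ^n` for some generic `δ`. -/
def IsCannyEmiris (Q : Set (Fin n → ℝ)) (H : Set ((Fin n → ℝ) × ℝ))
    (E : Set (Fin n → ℤ)) : Prop :=
  ∃ δ : Fin n → ℝ, GenericDelta Q H δ ∧ E = {p | zR p - δ ∈ Q}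

/-- The value `h(x)` of the concave function with hypograph `H`, as an extended real. -/
noncomputable def hvalS (H : Set ((Fin n → ℝ) × ℝ)) (x : Fin n → ℝ) : EReal :=
  ⨆ t ∈ {s : ℝ | (x, s) ∈ H}, (t : EReal)

/-- Embedding of `ℝ ∪ {-∞}` into the extended reals. -/
noncomputable def tE : Trop → EReal := WithBot.recBotCoe ⊥ (fun r : ℝ => (r : EReal))

/-- `𝒞(x, h) = argmax_q (⟨q, x⟩ + h(q))`, for the concave function `h` with hypograph `H`. -/
def CsetS (x : Fin n → ℝ) (H : Set ((Fin n → ℝ) × ℝ)) : Set (Fin n → ℝ) :=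
  {w | ∀ w', hvalS H w' + ((dotR w' x : ℝ) : EReal) ≤ hvalS H w + ((dotR w x : ℝ) : EReal)}

/-- `ℱ(x, h) = {(q, h(q)) : q ∈ 𝒞(x, h)}`, for the concave function `h` with hypograph `H`. -/
def FcalS (x : Fin n → ℝ) (H : Set ((Fin n → ℝ) × ℝ)) : Set ((Fin n → ℝ) × ℝ) :=
  {z | ((z.2 : ℝ) : EReal) = hvalS H z.1 ∧ z.1 ∈ CsetS x H}

/-- The three relation symbols `≥`, `=`, `>`. -/
inductive TRel3 : Type | ge : TRel3 | eq : TRel3 | gt : TRel3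

/-- Interpretation of a relation symbol on the tropical semiring. -/
def TRel3.holds : TRel3 → Trop → Trop → Prop
  | .ge, a, b => b ≤ a
  | .eq, a, b => a = b
  | .gt, a, b => b < a

/-- The two relation symbols `≥`, `=`. -/
inductive TRel2 : Type | ge : TRel2 | eq : TRel2

/-- Interpretation of a relation symbol on the tropical semiring. -/
def TRel2.holds : TRel2 → Trop → Trop → Prop
  | .ge, a, b => b ≤ a
  | .eq, a, b => a = b

/-- `v` is the value `f(x) = max_α (f_α + ⟨x, α⟩)` (the maximum being attained). -/
def EvalIs (f : (Fin n → ℤ) → Trop) (x : Fin n → ℝ) (v : Trop) : Prop :=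
  (∀ α, mono f x α ≤ v) ∧ ∃ α, mono f x α = v

/-- `x` satisfies the relation `f⁺(x) ⊳ f⁻(x)`. -/
def SolvesRel3 (r : TRel3) (fp fm : (Fin n → ℤ) → Trop) (x : Fin n → ℝ) : Prop :=
  ∃ vp vm : Trop, EvalIs fp x vp ∧ EvalIs fm x vm ∧ r.holds vp vm

/-- `x` satisfies the relation `f⁺(x) ⊳ f⁻(x)` (two-sided, no strict inequality). -/
def SolvesRel2 (r : TRel2) (fp fm : (Fin n → ℤ) → Trop) (x : Fin n → ℝ) : Prop :=
  ∃ vp vm : Trop, EvalIs fp x vp ∧ EvalIs fm x vm ∧ r.holds vp vm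

/-- `v` is the value of the row `(f, α)` of the Macaulay matrix against `y`, over columns `E`. -/
def RowEvalIs (f : (Fin n → ℤ) → Trop) (α : Fin n → ℤ) (E : Set (Fin n → ℤ))
    (y : (Fin n → ℤ) → Trop) (v : Trop) : Prop :=
  (∀ β ∈ E, f (β - α) + y β ≤ v) ∧ ∃ β ∈ E, f (β - α) + y β = v

/-- The linearized system `M⁺_E ⊙ y ⊳ M⁻_E ⊙ y`: for every row `(i, α)` with
`α + 𝒜 i ⊆ E`, the relation `⊳ᵢ` holds between the two row values. -/
def MacaulayRel3 (r : Fin k → TRel3) (fp fm : Fin k → (Fin n → ℤ) → Trop)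
    (A : Fin k → Set (Fin n → ℤ)) (E : Set (Fin n → ℤ)) (y : (Fin n → ℤ) → Trop) : Prop :=
  ∀ (i : Fin k) (α : Fin n → ℤ), (∀ γ ∈ A i, α + γ ∈ E) →
    ∃ vp vm : Trop, RowEvalIs (fp i) α E y vp ∧ RowEvalIs (fm i) α E y vm ∧
      (r i).holds vp vm

/-- The integer `r_i` associated to a relation and the supports `𝒜_i^±`. -/
noncomputable def rOf3 (r : TRel3) (Sp Sm : Set (Fin n → ℤ)) : ℕ :=
  match r with
  | .eq => max (sdim (zR '' Sm)) (sdim (zR '' Sp)) + 1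
  | _ => sdim (zR '' Sm) + 1

/-- The integer `r_i` associated to a relation and the supports `𝒜_i^±`. -/
noncomputable def rOf2 (r : TRel2) (Sp Sm : Set (Fin n → ℤ)) : ℕ :=
  match r with
  | .eq => max (sdim (zR '' Sm)) (sdim (zR '' Sp)) + 1
  | .ge => sdim (zR '' Sm) + 1

/-- The dilated polytope `Q̃ = r_1 Q_1 + ⋯ + r_k Q_k` of a two-sided system. -/
noncomputable def Qtilde3 (r : Fin k → TRel3) (fp fm : Fin k → (Fin n → ℤ) → Trop) :
    Set (Fin n → ℝ) :=
  ∑ i, (rOf3 (r i) (tsupp (fp i)) (tsupp (fm i)) : ℝ) •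
      convexHull ℝ (zR '' (tsupp (fp i) ∪ tsupp (fm i)))

/-- The hypograph of `h̃ = h_1^{□r_1} □ ⋯ □ h_k^{□r_k}` for a two-sided system,
where `h_i` is the concave hull of the coefficient map of `f_i = f_i⁺ ⊕ f_i⁻`. -/
noncomputable def Htilde3 (r : Fin k → TRel3) (fp fm : Fin k → (Fin n → ℤ) → Trop) :
    Set ((Fin n → ℝ) × ℝ) :=
  ∑ i, (rOf3 (r i) (tsupp (fp i)) (tsupp (fm i)) : ℝ) • hypoF (fun α => fp i α ⊔ fm i α)

/-- Same as `Qtilde3` without strict inequalities. -/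
noncomputable def Qtilde2 (r : Fin k → TRel2) (fp fm : Fin k → (Fin n → ℤ) → Trop) :
    Set (Fin n → ℝ) :=
  ∑ i, (rOf2 (r i) (tsupp (fp i)) (tsupp (fm i)) : ℝ) •
      convexHull ℝ (zR '' (tsupp (fp i) ∪ tsupp (fm i)))

/-- Same as `Htilde3` without strict inequalities. -/
noncomputable def Htilde2 (r : Fin k → TRel2) (fp fm : Fin k → (Fin n → ℤ) → Trop) :
    Set ((Fin n → ℝ) × ℝ) :=
  ∑ i, (rOf2 (r i) (tsupp (fp i)) (tsupp (fm i)) : ℝ) • hypoF (fun α => fp i α ⊔ fm i α)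

/-- Hypograph of a function `ℝ^n → ℝ ∪ {±∞}`. -/
def hypoE (g : (Fin n → ℝ) → EReal) : Set ((Fin n → ℝ) × ℝ) :=
  {z | (z.2 : EReal) ≤ g z.1}

/-- Sup-convolution `h_1 □ ⋯ □ h_ℓ` of a finite family:
`x ↦ sup {h_1(w_1) + ⋯ + h_ℓ(w_ℓ) : w_1 + ⋯ + w_ℓ = x}`. -/
noncomputable def supConvFam {ℓ : ℕ} (h : Fin ℓ → (Fin n → ℝ) → EReal) :
    (Fin n → ℝ) → EReal :=
  fun x => ⨆ (w : Fin ℓ → Fin n → ℝ) (_ : ∑ i, w i = x), ∑ i, h i (w i)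

/-- `ℱ(x, g) = {(q, g(q)) : q ∈ argmax(⟨q, x⟩ + g(q))}` for `g : ℝ^n → ℝ ∪ {±∞}`. -/
def FcalE (x : Fin n → ℝ) (g : (Fin n → ℝ) → EReal) : Set ((Fin n → ℝ) × ℝ) :=
  {z | (z.2 : EReal) = g z.1 ∧
    ∀ w, g w + ((dotR w x : ℝ) : EReal) ≤ g z.1 + ((dotR z.1 x : ℝ) : EReal)}

/-- Tropical matrix-vector product: `(A ⊙ y)_i = max_j (a_{ij} + y_j)`. -/
noncomputable def tApp (A : Fin p → Fin q → Trop) (y : Fin q → Trop) (i : Fin p) : Trop :=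
  Finset.univ.sup fun j => A i j + y j

/-- `A ⊙ y ∇ 𝟘`: in every row the maximum is attained at least twice. -/
def TropNullVec (A : Fin p → Fin q → Trop) (y : Fin q → Trop) : Prop :=
  ∀ i, ∃ j j' : Fin q, j ≠ j' ∧ A i j + y j = A i j' + y j' ∧
    ∀ l, A i l + y l ≤ A i j + y j

/-- The lattice points `NΔ ∩ ℕ^n` of the `N`-dilated unit simplex. -/
def simplexPts (n N : ℕ) : Set (Fin n → ℤ) :=
  {α | (∀ j, 0 ≤ α j) ∧ (∑ j, α j) ≤ (N : ℤ)}


/-- A strictly diagonally dominant tropical matrix is tropically nonsingular: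
if `a_{ii} > a_{ij}` for all `i ≠ j`, the only `y` with `A ⊙ y ∇ 𝟘` is `y = 𝟘`. -/
theorem diag_dominant_tropically_nonsingular {p : ℕ} (A : Fin p → Fin p → Trop)
    (hdom : ∀ i j : Fin p, i ≠ j → A i j < A i i) :
    ∀ y : Fin p → Trop, TropNullVec A y → y = fun _ => (⊥ : Trop) := by
  intro y hy
  by_contra hne
  have hex : ∃ i, y i ≠ ⊥ := by
    by_contra h'
    push_neg at h'
    exact hne (funext fun i => h' i)
  obtain ⟨i₀, hi₀⟩ := hex
  obtain ⟨i, -, hi⟩ := Finset.exists_max_image Finset.univ y ⟨i₀, Finset.mem_univ _⟩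
  have hib : y i ≠ ⊥ := by
    intro hb
    exact hi₀ (le_bot_iff.mp (hb ▸ hi i₀ (Finset.mem_univ _)))
  obtain ⟨j, j', hjj', heq, hmax⟩ := hy i
  rcases ne_or_eq j i with hji | hji
  · have h1 : A i i + y i ≤ A i j + y j := hmax i
    have h2 : A i j + y j ≤ A i j + y i := add_le_add_right (hi j (Finset.mem_univ _)) _
    have h3 : A i j + y i < A i i + y i :=
      WithBot.add_lt_add_right hib (hdom i j (Ne.symm hji))
    exact absurd (h1.trans h2) (not_le.mpr h3)
  · subst hji
    have hj'i : j' ≠ j := fun h => hjj' h.symm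
    have h1 : A j j + y j ≤ A j j' + y j' := heq.le
    have h2 : A j j' + y j' ≤ A j j' + y j := add_le_add_right (hi j' (Finset.mem_univ _)) _
    have h3 : A j j' + y j < A j j + y j :=
      WithBot.add_lt_add_right hib (hdom j j' (Ne.symm hj'i))
    exact absurd (h1.trans h2) (not_le.mpr h3)


end TropicalNSS
end

section
/- Dimension of the restricted normal cone of a face: let P be a polyhedron in ℝ^n and let W be the vector subspace of ℝ^n directing the affine hull of P. Then for every face F of P, dim(N_F(P) ∩ W) = dim(P) − dim(F). -/
open scoped Pointwise

namespace TropicalNSS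

variable {n k p q : ℕ}

-- auxiliary lemmas
def toE (x : Fin n → ℝ) : EuclideanSpace ℝ (Fin n) := WithLp.toLp 2 x

lemma dotR_add_right (x y z : Fin n → ℝ) : dotR x (y + z) = dotR x y + dotR x z := by
  simp [dotR, mul_add, Finset.sum_add_distrib]

lemma dotR_sub_right (x y z : Fin n → ℝ) : dotR x (y - z) = dotR x y - dotR x z := by
  simp [dotR, mul_sub, Finset.sum_sub_distrib]

lemma dotR_smul_right (x : Fin n → ℝ) (t : ℝ) (y : Fin n → ℝ) :
    dotR x (t • y) = t * dotR x y := by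
  simp only [dotR, Pi.smul_apply, smul_eq_mul, Finset.mul_sum]
  exact Finset.sum_congr rfl fun i _ => by ring

lemma dotR_comm (x y : Fin n → ℝ) : dotR x y = dotR y x := by
  simp [dotR, mul_comm]

lemma dotR_eq_inner (x y : Fin n → ℝ) : dotR x y = inner ℝ (toE x) (toE y) := by
  simp [dotR, PiLp.inner_apply, RCLike.inner_apply, conj_trivial, toE, mul_comm]

/-- From a relative interior point, one can move a bit in any direction of the
affine hull while staying in the set. -/
lemma relint_line {F : Set (Fin n → ℝ)} {x₀ : Fin n → ℝ} (hx₀ : x₀ ∈ intrinsicInterior ℝ F)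
    {u : Fin n → ℝ} (hu : u ∈ (affineSpan ℝ F).direction) :
    ∃ ε : ℝ, 0 < ε ∧ x₀ + ε • u ∈ F ∧ x₀ - ε • u ∈ F := by
  obtain ⟨y, hy, hyx⟩ := hx₀
  have hx₀F : x₀ ∈ affineSpan ℝ F := hyx ▸ y.2
  have hmem : ∀ t : ℝ, x₀ + t • u ∈ affineSpan ℝ F := by
    intro t
    have := AffineSubspace.vadd_mem_of_mem_direction (Submodule.smul_mem _ t hu) hx₀F
    simpa [add_comm] using this
  set ψ : ℝ → (affineSpan ℝ F : Set (Fin n → ℝ)) := fun t => ⟨x₀ + t • u, hmem t⟩ with hψ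
  have hψc : Continuous ψ := by
    apply Continuous.subtype_mk
    exact continuous_const.add (continuous_id.smul continuous_const)
  have hψ0 : ψ 0 = y := by
    apply Subtype.ext
    simp [hψ, hyx]
  have hopen : IsOpen (ψ ⁻¹' interior ((↑) ⁻¹' F)) := isOpen_interior.preimage hψc
  have h0 : (0:ℝ) ∈ ψ ⁻¹' interior ((↑) ⁻¹' F) := by
    rw [Set.mem_preimage, hψ0]; exact hy
  obtain ⟨ε, hε, hball⟩ := Metric.isOpen_iff.1 hopen 0 h0
  have hmem2 : ∀ t : ℝ, |t| < ε → x₀ + t • u ∈ F := by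
    intro t ht
    have h1 : ψ t ∈ interior ((↑) ⁻¹' F) := hball (by simpa [Real.dist_eq] using ht)
    exact (interior_subset h1 : ψ t ∈ (↑) ⁻¹' F)
  refine ⟨ε/2, by linarith, hmem2 _ (by rw [abs_of_pos (by linarith)]; linarith), ?_⟩
  have := hmem2 (-(ε/2)) (by rw [abs_neg, abs_of_pos (by linarith)]; linarith)
  rwa [neg_smul, ← sub_eq_add_neg] at this


/-- Dimension of the restricted normal cone of a face: if `W` directs the affine hull of
the polyhedron `P` and `F` is a face of `P`, then `dim (N_F(P) ∩ W) = dim P - dim F`. -/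
theorem dim_normal_cone_inter_direction {n : ℕ}
    (P : Set (Fin n → ℝ)) (hP : IsPolyhedron P)
    (F : Set (Fin n → ℝ)) (hF : IsFaceOf F P)
    (x₀ : Fin n → ℝ) (hx₀ : x₀ ∈ intrinsicInterior ℝ F) :
    sdim (normalCone P x₀ ∩ ((affineSpan ℝ P).direction : Set (Fin n → ℝ)))
      = sdim P - sdim F := by
  classical
  obtain ⟨S, hSfin, hPeq⟩ := hP
  have hx₀F : x₀ ∈ F := intrinsicInterior_subset hx₀
  have hFP : F ⊆ P := hF.2.1
  have hx₀P : x₀ ∈ P := hFP hx₀F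
  set Q : Set (Fin n → ℝ) :=
    normalCone P x₀ ∩ ((affineSpan ℝ P).direction : Set (Fin n → ℝ)) with hQdef
  let W : Submodule ℝ (EuclideanSpace ℝ (Fin n)) := Submodule.comap (WithLp.linearEquiv 2 ℝ (Fin n → ℝ)).toLinearMap (affineSpan ℝ P).direction
  let U : Submodule ℝ (EuclideanSpace ℝ (Fin n)) := Submodule.comap (WithLp.linearEquiv 2 ℝ (Fin n → ℝ)).toLinearMap (affineSpan ℝ F).direction
  have hUW : U ≤ W := Submodule.comap_mono (AffineSubspace.direction_le (affineSpan_mono ℝ hFP))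
  let M : Submodule ℝ (EuclideanSpace ℝ (Fin n)) := Submodule.span ℝ (toE '' Q)
  -- every normal vector is orthogonal to U
  have hNUperp : ∀ y ∈ normalCone P x₀, ∀ u : Fin n → ℝ, toE u ∈ U → dotR y u = 0 := by
    intro y hy u hu
    obtain ⟨ε, hε, h1, h2⟩ := relint_line hx₀ hu
    have e1 : dotR y ((x₀ + ε • u) - x₀) ≤ 0 := hy _ (hFP h1)
    have e2 : dotR y ((x₀ - ε • u) - x₀) ≤ 0 := hy _ (hFP h2)
    rw [add_sub_cancel_left, dotR_smul_right] at e1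
    rw [sub_sub_cancel_left, ← neg_smul, dotR_smul_right] at e2
    nlinarith
  have hMle : M ≤ Uᗮ ⊓ W := by
    apply Submodule.span_le.2
    rintro _ ⟨y, ⟨hyN, hyW⟩, rfl⟩
    refine Submodule.mem_inf.2 ⟨(Submodule.mem_orthogonal U (toE y)).2 fun u hu => ?_, hyW⟩
    rw [show (inner ℝ u (toE y) : ℝ) = inner ℝ (toE y) (toE u) from real_inner_comm _ _,
      ← dotR_eq_inner]
    exact hNUperp y hyN u hu
  -- key inclusion
  have hkey : Mᗮ ⊓ W ≤ U := by
    have main : ∀ v : Fin n → ℝ, toE v ∈ Mᗮ → toE v ∈ W → toE v ∈ U := by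
      intro v hvM hvW
      have hvM' : ∀ u ∈ M, (inner ℝ u (toE v) : ℝ) = 0 :=
        (Submodule.mem_orthogonal M (toE v)).1 hvM
      -- active constraints are orthogonal to v
      have hactive : ∀ c ∈ S, dotR c.1 x₀ = c.2 → dotR c.1 v = 0 := by
        intro c hc hceq
        set cwE : EuclideanSpace ℝ (Fin n) := W.starProjection (toE c.1) with hcwE
        have hcwW : cwE ∈ W := W.starProjection_apply_mem _
        have hproj : ∀ w : Fin n → ℝ, toE w ∈ W → (inner ℝ cwE (toE w) : ℝ) = inner ℝ (toE c.1) (toE w) := by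
          intro w hw
          have h := Submodule.starProjection_inner_eq_zero (K := W) (toE c.1) (toE w) hw
          rw [inner_sub_left] at h
          linarith [h]
        have hcwN : cwE.ofLp ∈ normalCone P x₀ := by
          intro z hz
          have hzW : toE (z - x₀) ∈ W :=
            AffineSubspace.vsub_mem_direction (subset_affineSpan ℝ P hz) (subset_affineSpan ℝ P hx₀P)
          have hz' : dotR c.1 z ≤ c.2 := (hPeq ▸ hz) c hc
          calc dotR cwE.ofLp (z - x₀) = inner ℝ cwE (toE (z - x₀)) := dotR_eq_inner _ _
            _ = inner ℝ (toE c.1) (toE (z - x₀)) := hproj _ hzW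
            _ = dotR c.1 (z - x₀) := (dotR_eq_inner _ _).symm
            _ = dotR c.1 z - dotR c.1 x₀ := dotR_sub_right _ _ _
            _ ≤ 0 := by rw [hceq]; linarith
        have h0 : (inner ℝ cwE (toE v) : ℝ) = 0 := hvM' _ (Submodule.subset_span ⟨cwE.ofLp, ⟨hcwN, hcwW⟩, rfl⟩)
        rw [dotR_eq_inner, ← hproj v hvW]
        exact h0
      -- find ε with x₀ ± ε v ∈ P
      set O : Set ℝ := ⋂ c ∈ hSfin.toFinset,
        ({t : ℝ | dotR c.1 x₀ + t * dotR c.1 v < c.2} ∪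
          {t : ℝ | dotR c.1 v = 0 ∧ dotR c.1 x₀ ≤ c.2}) with hOdef
      have hOopen : IsOpen O := by
        apply isOpen_biInter_finset
        intro c hc
        apply IsOpen.union
        · exact isOpen_lt (continuous_const.add (continuous_id.mul continuous_const)) continuous_const
        · by_cases h : dotR c.1 v = 0 ∧ dotR c.1 x₀ ≤ c.2
          · convert isOpen_univ using 1; ext t; simp [h]
          · convert isOpen_empty using 1; ext t; simp [h]
      have hO0 : (0:ℝ) ∈ O := by
        rw [hOdef, Set.mem_iInter₂]
        intro c hc
        rw [Set.Finite.mem_toFinset] at hc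
        have hle : dotR c.1 x₀ ≤ c.2 := (hPeq ▸ hx₀P) c hc
        rcases lt_or_eq_of_le hle with h | h
        · left; simpa using h
        · right; exact ⟨hactive c hc h, hle⟩
      obtain ⟨ε, hε, hball⟩ := Metric.isOpen_iff.1 hOopen 0 hO0
      have hOP : ∀ t : ℝ, t ∈ O → x₀ + t • v ∈ P := by
        intro t ht
        rw [hPeq]
        intro c hc
        rw [hOdef, Set.mem_iInter₂] at ht
        have htc := ht c (hSfin.mem_toFinset.2 hc)
        have hval : dotR c.1 (x₀ + t • v) = dotR c.1 x₀ + t * dotR c.1 v := by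
          rw [dotR_add_right, dotR_smul_right]
        rcases htc with h | h
        · rw [hval]; exact le_of_lt h
        · rw [hval, h.1]; simpa using h.2
      have ht1 : (ε/2 : ℝ) ∈ Metric.ball (0:ℝ) ε := by
        rw [Metric.mem_ball, Real.dist_eq, sub_zero, abs_of_pos (by linarith)]; linarith
      have ht2 : (-(ε/2) : ℝ) ∈ Metric.ball (0:ℝ) ε := by
        rw [Metric.mem_ball, Real.dist_eq, sub_zero, abs_neg, abs_of_pos (by linarith)]; linarith
      have h1P : x₀ + (ε/2) • v ∈ P := hOP _ (hball ht1)
      have h2P : x₀ - (ε/2) • v ∈ P := by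
        have := hOP _ (hball ht2)
        rwa [neg_smul, ← sub_eq_add_neg] at this
      have hseg : x₀ ∈ openSegment ℝ (x₀ + (ε/2) • v) (x₀ - (ε/2) • v) :=
        ⟨1/2, 1/2, by norm_num, by norm_num, by norm_num, by module⟩
      have h1F : x₀ + (ε/2) • v ∈ F := hF.2.2 h1P h2P hx₀F hseg
      have htv : toE ((ε/2) • v) ∈ U := by
        have := AffineSubspace.vsub_mem_direction (subset_affineSpan ℝ F h1F) (subset_affineSpan ℝ F hx₀F)
        exact (by simpa [vsub_eq_sub, add_sub_cancel_left] using this : (ε/2) • v ∈ (affineSpan ℝ F).direction)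
      have hfin := U.smul_mem (ε/2)⁻¹ htv
      have heq : ((ε/2)⁻¹ : ℝ) • toE ((ε/2) • v) = toE v := by
        show WithLp.toLp 2 (((ε/2)⁻¹ : ℝ) • ((ε/2) • v)) = WithLp.toLp 2 v
        rw [smul_smul, inv_mul_cancel₀ (by positivity), one_smul]
      rwa [heq] at hfin
    intro v hv
    exact main v (Submodule.mem_inf.1 hv).1 (Submodule.mem_inf.1 hv).2
  -- rank computations
  have hMW : M ≤ W := le_trans hMle inf_le_right
  have r1 : Module.finrank ℝ ↥M + Module.finrank ℝ ↥(Mᗮ ⊓ W) = Module.finrank ℝ ↥W :=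
    Submodule.finrank_add_inf_finrank_orthogonal hMW
  have r2 : Module.finrank ℝ ↥U + Module.finrank ℝ ↥(Uᗮ ⊓ W) = Module.finrank ℝ ↥W :=
    Submodule.finrank_add_inf_finrank_orthogonal hUW
  have l1 : Module.finrank ℝ ↥M ≤ Module.finrank ℝ ↥(Uᗮ ⊓ W) := Submodule.finrank_mono hMle
  have l2 : Module.finrank ℝ ↥(Mᗮ ⊓ W) ≤ Module.finrank ℝ ↥U := Submodule.finrank_mono hkey
  -- identify sdim Q with finrank M
  have h0Q : (0 : Fin n → ℝ) ∈ Q := ⟨fun z hz => by simp [dotR], Submodule.zero_mem _⟩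
  have hsQ : sdim Q = Module.finrank ℝ ↥M := by
    unfold sdim
    rw [direction_affineSpan, vectorSpan_eq_span_vsub_set_right ℝ h0Q]
    have himg : (fun x => x -ᵥ (0 : Fin n → ℝ)) '' Q = Q := by
      simp [vsub_eq_sub]
    rw [himg]
    have hM : M = Submodule.map (WithLp.linearEquiv 2 ℝ (Fin n → ℝ)).symm.toLinearMap (Submodule.span ℝ Q) :=
      Submodule.span_image (WithLp.linearEquiv 2 ℝ (Fin n → ℝ)).symm.toLinearMap
    rw [hM, LinearEquiv.finrank_map_eq]
  have hsP : sdim P = Module.finrank ℝ ↥W := by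
    show _ = Module.finrank ℝ ↥(Submodule.comap (WithLp.linearEquiv 2 ℝ (Fin n → ℝ)).toLinearMap (affineSpan ℝ P).direction)
    rw [Submodule.comap_equiv_eq_map_symm, LinearEquiv.finrank_map_eq]; rfl
  have hsF : sdim F = Module.finrank ℝ ↥U := by
    show _ = Module.finrank ℝ ↥(Submodule.comap (WithLp.linearEquiv 2 ℝ (Fin n → ℝ)).toLinearMap (affineSpan ℝ F).direction)
    rw [Submodule.comap_equiv_eq_map_symm, LinearEquiv.finrank_map_eq]; rfl
  rw [hsQ, hsP, hsF]
  omega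


end TropicalNSS
end

section
/- Two-sided diagonal dominance forces a trivial solution set: let A = (a_{ij}) and B = (b_{ij}) be matrices in 𝕋^{p×p} such that b_{ii} > a_{ij} for all 1 ≤ i, j ≤ p (A is diagonally dominated by B). Then the only vector y ∈ 𝕋^p satisfying A ⊙ y ≥ B ⊙ y (coordinatewise) is y = 𝟘 = (−∞,…,−∞). -/
open scoped Pointwise

namespace TropicalNSS

variable {n k p q : ℕ}

/-- Two-sided diagonal dominance forces a trivial solution set: if `b_{ii} > a_{ij}` for
all `i, j`, the only `y ∈ 𝕋^p` with `A ⊙ y ≥ B ⊙ y` is `y = 𝟘`. -/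
theorem two_sided_diag_dominance {p : ℕ} (A B : Fin p → Fin p → Trop)
    (hdom : ∀ i j : Fin p, A i j < B i i) :
    ∀ y : Fin p → Trop, (∀ i, tApp B y i ≤ tApp A y i) → y = fun _ => (⊥ : Trop) := by
  intro y hy
  by_contra h
  have hne : ∃ i, y i ≠ ⊥ := by
    by_contra h'
    push_neg at h'
    exact h (funext fun i => h' i)
  obtain ⟨i0, hi0⟩ := hne
  obtain ⟨j, -, hj⟩ := Finset.exists_max_image Finset.univ y ⟨i0, Finset.mem_univ i0⟩
  have hyj : y j ≠ ⊥ := fun hb => hi0 (le_bot_iff.mp (hb ▸ hj i0 (Finset.mem_univ i0)))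
  have hBjj : B j j ≠ ⊥ := fun hb => by simpa [hb] using hdom j j
  have hpos : (⊥ : Trop) < B j j + y j := by
    rcases WithBot.ne_bot_iff_exists.mp hBjj with ⟨b, hb⟩
    rcases WithBot.ne_bot_iff_exists.mp hyj with ⟨c, hc⟩
    rw [← hb, ← hc]
    exact_mod_cast WithBot.bot_lt_coe _
  have hlt : tApp A y j < B j j + y j := by
    rw [tApp]
    apply Finset.sup_lt_iff hpos |>.mpr
    intro l _
    rcases eq_or_ne (y l) ⊥ with hl | hl
    · simpa [hl] using hpos
    · calc A j l + y l < B j j + y l := by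
            rcases WithBot.ne_bot_iff_exists.mp hl with ⟨c, hc⟩
            rw [← hc]
            exact WithBot.add_lt_add_right (WithBot.coe_ne_bot) (hdom j l)
        _ ≤ B j j + y j := add_le_add_right (hj l (Finset.mem_univ l)) _
  have hle : B j j + y j ≤ tApp B y j := by
    exact Finset.le_sup (f := fun l => B j l + y l) (Finset.mem_univ j)
  exact absurd (hle.trans (hy j)) (not_le.mpr hlt)


end TropicalNSS
end

section
/- Rowwise alternating two-sided dominance forces a trivial solution set: let A = (a_{ij}) and B = (b_{ij}) be matrices in 𝕋^{p×p} such that for every 1 ≤ i ≤ p, either b_{ii} > max_{1≤j≤p} a_{ij} or a_{ii} > max_{1≤j≤p} b_{ij}. Then the only vector y ∈ 𝕋^p satisfying A ⊙ y = B ⊙ y is y = 𝟘 = (−∞,…,−∞). -/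
open scoped Pointwise

namespace TropicalNSS

variable {n k p q : ℕ}

/-- Rowwise alternating two-sided dominance forces a trivial solution set: if in every
row `i` either `b_{ii} > max_j a_{ij}` or `a_{ii} > max_j b_{ij}`, the only `y` with
`A ⊙ y = B ⊙ y` is `y = 𝟘`. -/
theorem alternating_diag_dominance {p : ℕ} (A B : Fin p → Fin p → Trop)
    (hdom : ∀ i : Fin p,
        (Finset.univ.sup fun j => A i j) < B i i ∨
        (Finset.univ.sup fun j => B i j) < A i i) :
    ∀ y : Fin p → Trop, (∀ i, tApp A y i = tApp B y i) → y = fun _ => (⊥ : Trop) := by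
  intro y hy
  funext j0
  by_contra hj0
  -- pick i maximizing y
  obtain ⟨i, -, hmax⟩ := Finset.exists_max_image (Finset.univ : Finset (Fin p)) y ⟨j0, Finset.mem_univ j0⟩
  have hyi : y i ≠ ⊥ := fun h => hj0 (le_bot_iff.mp (h ▸ hmax j0 (Finset.mem_univ j0)))
  have key : ∀ (C : Fin p → Fin p → Trop),
      tApp C y i ≤ (Finset.univ.sup fun j => C i j) + y i := by
    intro C
    refine Finset.sup_le fun j _ => add_le_add (Finset.le_sup (Finset.mem_univ j))
      (hmax j (Finset.mem_univ j))
  rcases hdom i with h | h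
  · have h1 : B i i + y i ≤ tApp B y i := Finset.le_sup (f := fun j => B i j + y j) (Finset.mem_univ i)
    have h2 : (Finset.univ.sup fun j => A i j) + y i < B i i + y i :=
      WithBot.add_lt_add_right hyi h
    exact absurd (((key A).trans_lt h2).trans_le (h1.trans (hy i).ge)) (lt_irrefl _)
  · have h1 : A i i + y i ≤ tApp A y i := Finset.le_sup (f := fun j => A i j + y j) (Finset.mem_univ i)
    have h2 : (Finset.univ.sup fun j => B i j) + y i < A i i + y i :=
      WithBot.add_lt_add_right hyi h
    exact absurd (((key B).trans_lt h2).trans_le (h1.trans (hy i).le)) (lt_irrefl _)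

end TropicalNSS
end

section
/- Shapley-Folkman lemma, low-dimensional refinement: let A_1,…,A_k be subsets of ℝ^n and suppose that the Minkowski sum Σ_{i=1}^k conv(A_i) has affine dimension d with 1 ≤ d < n. Then for every x ∈ Σ_{i=1}^k conv(A_i) there exists an index set I ⊆ {1,…,k} with |I| ≤ d such that x ∈ Σ_{i∈I} conv(A_i) + Σ_{i∉I} A_i. -/
open scoped Pointwise

namespace TropicalNSS

variable {n k p q : ℕ}

/-- Core combinatorial step of the Shapley–Folkman argument: a representation of a point
as a sum of convex combinations can be reduced so that at most `d` of the combinations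
use two or more points, where `d` bounds the dimension of the span of all differences. -/
lemma sf_core {E : Type*} [AddCommGroup E] [Module ℝ E] {k d : ℕ}
    (V : Submodule ℝ E) [FiniteDimensional ℝ V] (hV : Module.finrank ℝ V ≤ d) :
    ∀ (N : ℕ) (s : Fin k → Finset E) (w : Fin k → E → ℝ),
      (∑ i, (s i).card) ≤ N →
      (∀ i, ∀ p ∈ s i, 0 ≤ w i p) →
      (∀ i, ∑ p ∈ s i, w i p = 1) →
      (∀ i, ∀ p ∈ s i, ∀ q ∈ s i, p - q ∈ V) →
      ∃ (s' : Fin k → Finset E) (w' : Fin k → E → ℝ),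
        (∀ i, s' i ⊆ s i) ∧
        (∀ i, ∀ p ∈ s' i, 0 ≤ w' i p) ∧
        (∀ i, ∑ p ∈ s' i, w' i p = 1) ∧
        (∑ i, ∑ p ∈ s' i, w' i p • p) = (∑ i, ∑ p ∈ s i, w i p • p) ∧
        (Finset.univ.filter fun i => 2 ≤ (s' i).card).card ≤ d := by
  intro N
  induction N with
  | zero =>
    intro s w hcard h0 h1 _
    refine ⟨s, w, fun i => Finset.Subset.refl _, h0, h1, rfl, ?_⟩
    have hs0 : ∀ i, (s i).card = 0 := by
      intro i
      have h : (s i).card ≤ ∑ j, (s j).card :=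
        Finset.single_le_sum (f := fun j => (s j).card) (fun j _ => Nat.zero_le _)
          (Finset.mem_univ i)
      omega
    have : (Finset.univ.filter fun i => 2 ≤ (s i).card) = ∅ := by
      apply Finset.filter_false_of_mem
      intro i _
      have := hs0 i
      omega
    simp [this]
  | succ N ih =>
    intro s w hcard h0 h1 hdiff
    classical
    by_cases hI : (Finset.univ.filter fun i => 2 ≤ (s i).card).card ≤ d
    · exact ⟨s, w, fun i => Finset.Subset.refl _, h0, h1, rfl, hI⟩
    push_neg at hI
    -- Key reduction step: if some point in the representation has zero weight,
    -- erase it and apply the induction hypothesis.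
    have key : ∀ w₂ : Fin k → E → ℝ,
        (∀ i, ∀ p ∈ s i, 0 ≤ w₂ i p) →
        (∀ i, ∑ p ∈ s i, w₂ i p = 1) →
        (∑ i, ∑ p ∈ s i, w₂ i p • p) = (∑ i, ∑ p ∈ s i, w i p • p) →
        (∃ i₀, ∃ r ∈ s i₀, w₂ i₀ r = 0) →
        ∃ (s' : Fin k → Finset E) (w' : Fin k → E → ℝ),
          (∀ i, s' i ⊆ s i) ∧
          (∀ i, ∀ p ∈ s' i, 0 ≤ w' i p) ∧
          (∀ i, ∑ p ∈ s' i, w' i p = 1) ∧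
          (∑ i, ∑ p ∈ s' i, w' i p • p) = (∑ i, ∑ p ∈ s i, w i p • p) ∧
          (Finset.univ.filter fun i => 2 ≤ (s' i).card).card ≤ d := by
      rintro w₂ h0₂ h1₂ hsum₂ ⟨i₀, r, hr, hr0⟩
      classical
      set s₂ : Fin k → Finset E := Function.update s i₀ ((s i₀).erase r) with hs₂
      have hsub₂ : ∀ i, s₂ i ⊆ s i := by
        intro i
        rcases eq_or_ne i i₀ with rfl | h
        · simp only [hs₂, Function.update_self]
          exact Finset.erase_subset _ _
        · simp [hs₂, Function.update_of_ne h]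
      have hcard₂ : ∑ i, (s₂ i).card ≤ N := by
        have hlt : ∑ i, (s₂ i).card < ∑ i, (s i).card := by
          apply Finset.sum_lt_sum
          · exact fun i _ => Finset.card_le_card (hsub₂ i)
          · refine ⟨i₀, Finset.mem_univ _, ?_⟩
            simp only [hs₂, Function.update_self]
            exact Finset.card_erase_lt_of_mem hr
        omega
      have h1₂' : ∀ i, ∑ p ∈ s₂ i, w₂ i p = 1 := by
        intro i
        rcases eq_or_ne i i₀ with rfl | h
        · simp only [hs₂, Function.update_self]
          rw [Finset.sum_erase_eq_sub hr, h1₂ _, hr0, sub_zero]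
        · simp only [hs₂, Function.update_of_ne h]
          exact h1₂ i
      have hvec₂ : ∀ i, ∑ p ∈ s₂ i, w₂ i p • p = ∑ p ∈ s i, w₂ i p • p := by
        intro i
        rcases eq_or_ne i i₀ with rfl | h
        · simp only [hs₂, Function.update_self]
          rw [Finset.sum_erase_eq_sub hr, hr0, zero_smul, sub_zero]
        · simp [hs₂, Function.update_of_ne h]
      obtain ⟨s', w', hsub, h0', h1', hsum', hfil⟩ :=
        ih s₂ w₂ hcard₂ (fun i p hp => h0₂ i p (hsub₂ i hp)) h1₂'
          (fun i p hp q hq => hdiff i p (hsub₂ i hp) q (hsub₂ i hq))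
      refine ⟨s', w', fun i => (hsub i).trans (hsub₂ i), h0', h1', ?_, hfil⟩
      rw [hsum', Finset.sum_congr rfl fun i _ => hvec₂ i, hsum₂]
    by_cases hz : ∃ i₀, ∃ r ∈ s i₀, w i₀ r = 0
    · exact key w h0 h1 rfl hz
    push_neg at hz
    have hpos : ∀ i, ∀ p ∈ s i, 0 < w i p :=
      fun i p hp => lt_of_le_of_ne (h0 i p hp) (Ne.symm (hz i p hp))
    set I : Finset (Fin k) := Finset.univ.filter fun i => 2 ≤ (s i).card with hIdef
    -- choose two points per index, distinct on `I`
    have hpq : ∀ i : Fin k, ∃ p q, p ∈ s i ∧ q ∈ s i ∧ (i ∈ I → p ≠ q) := by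
      intro i
      by_cases h : i ∈ I
      · have h2 : 1 < (s i).card := by
          have := (Finset.mem_filter.mp h).2
          omega
        obtain ⟨p, hp, q, hq, hne⟩ := Finset.one_lt_card.mp h2
        exact ⟨p, q, hp, hq, fun _ => hne⟩
      · have hne : (s i).Nonempty := by
          rcases Finset.eq_empty_or_nonempty (s i) with he | hne
          · exfalso
            have h1i := h1 i
            rw [he] at h1i
            simp at h1i
          · exact hne
        obtain ⟨p, hp⟩ := hne
        exact ⟨p, p, hp, hp, fun hi => absurd hi h⟩
    choose p q hp hq hpqne using hpq
    -- linear dependence of the difference vectors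
    have hdep : ¬ LinearIndependent ℝ
        (fun i : ↥I => (⟨p i - q i, hdiff i _ (hp i) _ (hq i)⟩ : V)) := by
      intro hli
      have hcardle := hli.fintype_card_le_finrank
      rw [Fintype.card_coe] at hcardle
      omega
    obtain ⟨g, hg0, i₀, hgi₀⟩ := Fintype.not_linearIndependent_iff.mp hdep
    set G : Fin k → ℝ := fun i => if h : i ∈ I then g ⟨i, h⟩ else 0 with hGdef
    have hGI : ∀ i, G i ≠ 0 → i ∈ I := by
      intro i h
      by_contra h'
      simp [hGdef, h'] at h
    have hGsum : ∑ i, G i • (p i - q i) = 0 := by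
      have hg0' : ∑ i : ↥I, g i • (p ↑i - q ↑i) = 0 := by
        have := congrArg (V.subtype) hg0
        simpa using this
      have e1 : ∑ i ∈ I, G i • (p i - q i) = 0 := by
        rw [← Finset.sum_attach I (fun i => G i • (p i - q i)), ← hg0']
        apply Finset.sum_congr rfl
        intro j _
        have : G ↑j = g j := by
          simp [hGdef, j.2]
        rw [this]
      rw [← e1]
      symm
      apply Finset.sum_subset (Finset.subset_univ I)
      intro i _ hi
      have : G i = 0 := by simp [hGdef, hi]
      rw [this, zero_smul]
    set T : Finset (Fin k) := Finset.univ.filter fun i => G i ≠ 0 with hTdef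
    have hT : T.Nonempty := by
      refine ⟨↑i₀, ?_⟩
      simp only [hTdef, Finset.mem_filter, Finset.mem_univ, true_and]
      have : G ↑i₀ = g i₀ := by simp [hGdef, i₀.2]
      rw [this]
      exact hgi₀
    set c : Fin k → ℝ :=
      fun i => if 0 < G i then w i (q i) / G i else w i (p i) / (-G i) with hcdef
    set t : ℝ := T.inf' hT c with htdef
    have hGT : ∀ i ∈ T, G i ≠ 0 := fun i hi => (Finset.mem_filter.mp hi).2
    have ht_le : ∀ i ∈ T, t ≤ c i := fun i hi => Finset.inf'_le c hi
    have htpos : 0 < t := by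
      rw [htdef, Finset.lt_inf'_iff]
      intro i hi
      have hGi := hGT i hi
      have hiI : i ∈ I := hGI i hGi
      rcases lt_or_gt_of_ne hGi with hneg | hposG
      · have : ¬ 0 < G i := by linarith
        simp only [hcdef, this, if_false]
        exact div_pos (hpos i _ (hp i)) (by linarith)
      · simp only [hcdef, hposG, if_true]
        exact div_pos (hpos i _ (hq i)) hposG
    obtain ⟨i₁, hi₁, hti₁⟩ := Finset.exists_mem_eq_inf' hT c
    set w₂ : Fin k → E → ℝ := fun i r =>
      w i r + t * G i * ((if r = p i then 1 else 0) - (if r = q i then 1 else 0)) with hw₂def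
    have hne_pq : ∀ i ∈ T, p i ≠ q i := fun i hi => hpqne i (hGI i (hGT i hi))
    -- nonnegativity
    have h0₂ : ∀ i, ∀ r ∈ s i, 0 ≤ w₂ i r := by
      intro i r hr
      by_cases hG : G i = 0
      · simp [hw₂def, hG, h0 i r hr]
      have hiT : i ∈ T := Finset.mem_filter.mpr ⟨Finset.mem_univ _, hG⟩
      have hnepq := hne_pq i hiT
      have htc := ht_le i hiT
      by_cases hrp : r = p i
      · have hrq : r ≠ q i := by rw [hrp]; exact hnepq
        simp only [hw₂def, hrp, eq_self_iff_true, if_true, if_neg (hrp ▸ hrq), sub_zero, mul_one]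
        rcases lt_or_gt_of_ne hG with hneg | hposG
        · have hnot : ¬ 0 < G i := by linarith
          rw [hcdef] at htc
          simp only [hnot, if_false] at htc
          rw [le_div_iff₀ (by linarith : (0:ℝ) < -G i)] at htc
          nlinarith [hpos i _ (hp i)]
        · nlinarith [hpos i _ (hp i), htpos]
      · by_cases hrq : r = q i
        · simp only [hw₂def, hrq, if_neg (Ne.symm hnepq), eq_self_iff_true, if_true,
            zero_sub, mul_neg, mul_one]
          rcases lt_or_gt_of_ne hG with hneg | hposG
          · nlinarith [hpos i _ (hq i), htpos]
          · rw [hcdef] at htc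
            simp only [hposG, if_true] at htc
            rw [le_div_iff₀ hposG] at htc
            nlinarith [hpos i _ (hq i)]
        · simp [hw₂def, hrp, hrq, h0 i r hr]
    -- weight sums are preserved
    have h1₂ : ∀ i, ∑ r ∈ s i, w₂ i r = 1 := by
      intro i
      have e1 : ∑ r ∈ s i, (if r = p i then (1:ℝ) else 0) = 1 := by
        rw [Finset.sum_ite_eq' (s i) (p i) (fun _ => (1:ℝ))]
        simp [hp i]
      have e2 : ∑ r ∈ s i, (if r = q i then (1:ℝ) else 0) = 1 := by
        rw [Finset.sum_ite_eq' (s i) (q i) (fun _ => (1:ℝ))]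
        simp [hq i]
      simp only [hw₂def]
      rw [Finset.sum_add_distrib, h1 i, ← Finset.mul_sum, Finset.sum_sub_distrib, e1, e2]
      ring
    -- the total vector sum is preserved
    have hsum₂ : (∑ i, ∑ r ∈ s i, w₂ i r • r) = (∑ i, ∑ r ∈ s i, w i r • r) := by
      have hper : ∀ i, ∑ r ∈ s i, w₂ i r • r
          = (∑ r ∈ s i, w i r • r) + (t * G i) • (p i - q i) := by
        intro i
        have ep : ∑ r ∈ s i, (t * G i * (if r = p i then (1:ℝ) else 0)) • r
            = (t * G i) • p i := by
          rw [Finset.sum_congr rfl (g := fun r => if r = p i then (t * G i) • r else 0)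
            (fun r _ => by split_ifs with h <;> simp [h])]
          rw [Finset.sum_ite_eq' (s i) (p i) (fun r => (t * G i) • r)]
          simp [hp i]
        have eq' : ∑ r ∈ s i, (t * G i * (if r = q i then (1:ℝ) else 0)) • r
            = (t * G i) • q i := by
          rw [Finset.sum_congr rfl (g := fun r => if r = q i then (t * G i) • r else 0)
            (fun r _ => by split_ifs with h <;> simp [h])]
          rw [Finset.sum_ite_eq' (s i) (q i) (fun r => (t * G i) • r)]
          simp [hq i]
        have : ∀ r ∈ s i, w₂ i r • r = w i r • r
            + ((t * G i * (if r = p i then (1:ℝ) else 0)) • r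
              - (t * G i * (if r = q i then (1:ℝ) else 0)) • r) := by
          intro r _
          simp only [hw₂def]
          rw [mul_sub, add_smul, sub_smul]
        rw [Finset.sum_congr rfl this, Finset.sum_add_distrib, Finset.sum_sub_distrib,
          ep, eq', smul_sub]
      rw [Finset.sum_congr rfl fun i _ => hper i, Finset.sum_add_distrib]
      have : ∑ i, (t * G i) • (p i - q i) = 0 := by
        have : ∀ i : Fin k, (t * G i) • (p i - q i) = t • (G i • (p i - q i)) :=
          fun i => by rw [mul_smul]
        rw [Finset.sum_congr rfl fun i _ => this i, ← Finset.smul_sum, hGsum, smul_zero]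
      rw [this, add_zero]
    -- some weight becomes zero
    have hzero₂ : ∃ i₂, ∃ r ∈ s i₂, w₂ i₂ r = 0 := by
      have hG₁ := hGT i₁ hi₁
      have hnepq := hne_pq i₁ hi₁
      rcases lt_or_gt_of_ne hG₁ with hneg | hposG
      · refine ⟨i₁, p i₁, hp i₁, ?_⟩
        have hrq : p i₁ ≠ q i₁ := hnepq
        simp only [hw₂def, eq_self_iff_true, if_true, if_neg hrq, sub_zero, mul_one]
        have hnot : ¬ 0 < G i₁ := by linarith
        have htceq : t = w i₁ (p i₁) / (-G i₁) := by
          rw [htdef, hti₁, hcdef]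
          simp [hnot]
        rw [htceq]
        rw [div_mul_eq_mul_div, div_neg, mul_div_cancel_right₀ _ hG₁]
        ring
      · refine ⟨i₁, q i₁, hq i₁, ?_⟩
        have hrp : q i₁ ≠ p i₁ := Ne.symm hnepq
        simp only [hw₂def, if_neg hrp, eq_self_iff_true, if_true, zero_sub, mul_neg, mul_one]
        have htceq : t = w i₁ (q i₁) / G i₁ := by
          rw [htdef, hti₁, hcdef]
          simp [hposG]
        rw [htceq]
        rw [div_mul_cancel₀ _ hG₁]; ring
    exact key w₂ h0₂ h1₂ hsum₂ hzero₂

/-- **Shapley-Folkman lemma, low-dimensional refinement.** If `Σ conv(A_i)` has affine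
dimension `d` with `1 ≤ d < n`, then every `x ∈ Σ conv(A_i)` lies in
`Σ_{i ∈ I} conv(A_i) + Σ_{i ∉ I} A_i` for some index set `I` with `|I| ≤ d`. -/
theorem shapley_folkman_low_dimensional {n k : ℕ}
    (A : Fin k → Set (Fin n → ℝ)) (d : ℕ) (hd1 : 1 ≤ d) (hdn : d < n)
    (hdim : sdim (∑ i, convexHull ℝ (A i)) = d) :
    ∀ x ∈ ∑ i, convexHull ℝ (A i),
      ∃ I : Finset (Fin k), I.card ≤ d ∧
        x ∈ (∑ i ∈ I, convexHull ℝ (A i)) + ∑ i ∈ Iᶜ, A i := by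
  classical
  intro x hx
  obtain ⟨y, hy, hxy⟩ := (Set.mem_finset_sum _ _ _).mp hx
  have hy' : ∀ i, y i ∈ convexHull ℝ (A i) := fun i => hy (Finset.mem_univ i)
  have hrep : ∀ i, ∃ s : Finset (Fin n → ℝ), ↑s ⊆ A i ∧
      ∃ w : (Fin n → ℝ) → ℝ, (∀ r ∈ s, 0 ≤ w r) ∧ (∑ r ∈ s, w r = 1) ∧
        (∑ r ∈ s, w r • r = y i) := by
    intro i
    have h := hy' i
    rw [convexHull_eq_union_convexHull_finite_subsets] at h
    simp only [Set.mem_iUnion] at h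
    obtain ⟨sf, hsf, hmem⟩ := h
    rw [Finset.convexHull_eq] at hmem
    obtain ⟨w, hw0, hw1, hwc⟩ := hmem
    refine ⟨sf, hsf, w, hw0, hw1, ?_⟩
    rw [← hwc, Finset.centerMass_eq_of_sum_1 _ _ hw1]
    rfl
  choose s hsA w hw0 hw1 hwy using hrep
  set V : Submodule ℝ (Fin n → ℝ) :=
    (affineSpan ℝ (∑ i, convexHull ℝ (A i))).direction with hVdef
  have hdiffV : ∀ i, ∀ p ∈ s i, ∀ q ∈ s i, p - q ∈ V := by
    intro i p hpm q hqm
    have hmem : ∀ z : Fin n → ℝ, z ∈ convexHull ℝ (A i) →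
        (∑ j, Function.update y i z j) ∈ ∑ j, convexHull ℝ (A j) := by
      intro z hz
      apply Set.finset_sum_mem_finset_sum
      intro j _
      rcases eq_or_ne j i with rfl | h
      · rwa [Function.update_self]
      · rw [Function.update_of_ne h]
        exact hy' j
    have hpS := hmem p (subset_convexHull ℝ (A i) (hsA i hpm))
    have hqS := hmem q (subset_convexHull ℝ (A i) (hsA i hqm))
    have hsub : (∑ j, Function.update y i p j) - (∑ j, Function.update y i q j)
        = p - q := by
      rw [Finset.sum_update_of_mem (Finset.mem_univ i),
        Finset.sum_update_of_mem (Finset.mem_univ i)]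
      abel
    have := AffineSubspace.vsub_mem_direction
      (subset_affineSpan ℝ _ hpS) (subset_affineSpan ℝ _ hqS)
    rw [hVdef]
    rwa [vsub_eq_sub, hsub] at this
  have hVd : Module.finrank ℝ V = d := hdim
  obtain ⟨s', w', hsub, h0', h1', hsum', hfil⟩ :=
    sf_core V (le_of_eq hVd) (∑ i, (s i).card) s w le_rfl hw0 hw1 hdiffV
  refine ⟨Finset.univ.filter fun i => 2 ≤ (s' i).card, hfil, ?_⟩
  have hx' : x = ∑ i, ∑ r ∈ s' i, w' i r • r := by
    rw [hsum', Finset.sum_congr rfl fun i _ => hwy i, hxy]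
  have hsplit : (∑ i, ∑ r ∈ s' i, w' i r • r)
      = (∑ i ∈ Finset.univ.filter fun i => 2 ≤ (s' i).card, ∑ r ∈ s' i, w' i r • r)
      + (∑ i ∈ (Finset.univ.filter fun i => 2 ≤ (s' i).card)ᶜ, ∑ r ∈ s' i, w' i r • r) := by
    rw [Finset.compl_filter, ← Finset.sum_filter_add_sum_filter_not Finset.univ
      (fun i => 2 ≤ (s' i).card)]
  rw [hx', hsplit]
  apply Set.add_mem_add
  · apply Set.finset_sum_mem_finset_sum
    intro i _
    have hcm : (s' i).centerMass (w' i) id ∈ convexHull ℝ (A i) := by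
      apply Finset.centerMass_mem_convexHull
      · exact h0' i
      · rw [h1' i]; norm_num
      · intro r hr
        exact hsA i (hsub i hr)
    rw [Finset.centerMass_eq_of_sum_1 _ _ (h1' i)] at hcm
    exact hcm
  · apply Set.finset_sum_mem_finset_sum
    intro i hi
    have hcard1 : (s' i).card ≤ 1 := by
      rw [Finset.mem_compl, Finset.mem_filter] at hi
      push_neg at hi
      have := hi (Finset.mem_univ i)
      omega
    have hne : (s' i).Nonempty := by
      rcases Finset.eq_empty_or_nonempty (s' i) with he | hne
      · exfalso
        have h1i := h1' i
        rw [he] at h1i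
        simp at h1i
      · exact hne
    have hcard : (s' i).card = 1 := le_antisymm hcard1 (Finset.card_pos.mpr hne)
    obtain ⟨r, hr⟩ := Finset.card_eq_one.mp hcard
    have hw1r : w' i r = 1 := by
      have := h1' i
      rw [hr, Finset.sum_singleton] at this
      exact this
    rw [hr, Finset.sum_singleton, hw1r, one_smul]
    exact hsA i (hsub i (by rw [hr]; exact Finset.mem_singleton_self r))

end TropicalNSS
end
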